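/- arXiv:1605.06586 — 5 statements merged into one kernel-verified Lean document; each statement's English description precedes it below -/
import Mathlib

section
/- Gibbs states are passive: let H be an n×n Hermitian complex matrix and β ≥ 0 a real number. Then for every unitary n×n matrix U, Tr(exp(−βH) · U* H U) ≥ Tr(exp(−βH) · H). Equivalently, the Gibbs expectation ω_β(a) = Tr(a·exp(−βH))/Tr(exp(−βH)) satisfies ω_β(U*[H,U]) ≥ 0 for every unitary U, where [H,U] = HU − UH. -/
/-!
Diagonalize `H = W diag(λ) W*` and put `V = W* U* W`. Then `exp(-βH) = W diag(e^{-βλ}) W*`, and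
the two traces become `∑ᵢ e^{-βλᵢ} λᵢ` and `∑ᵢⱼ e^{-βλᵢ} |Vᵢⱼ|² λⱼ`. The matrix `(|Vᵢⱼ|²)` is doubly
stochastic, hence (Birkhoff) a convex combination of permutation matrices, and for each permutation
the inequality is the rearrangement inequality, since `e^{-βλ}` and `λ` are oppositely ordered.
-/

open scoped Matrix
open NormedSpace

open Matrix in
theorem Antivary.dotProduct_le_dotProduct_mulVec {ι R : Type*} [Fintype ι] [DecidableEq ι]
    [Field R] [LinearOrder R] [IsStrictOrderedRing R] {a b : ι → R} (hab : Antivary a b)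
    {P : Matrix ι ι R} (hP : P ∈ doublyStochastic R ι) :
    a ⬝ᵥ b ≤ a ⬝ᵥ (P *ᵥ b) := by
  obtain ⟨w, hw_nonneg, hw_sum, hPw⟩ := exists_eq_sum_perm_of_mem_doublyStochastic hP
  have hσ (σ : Equiv.Perm ι) : a ⬝ᵥ b ≤ a ⬝ᵥ (σ.permMatrix R *ᵥ b) := by
    rw [permMatrix_mulVec]
    exact hab.sum_mul_le_sum_mul_comp_perm
  calc a ⬝ᵥ b = ∑ σ, w σ * a ⬝ᵥ b := by rw [← Finset.sum_mul, hw_sum, one_mul]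
    _ ≤ ∑ σ, w σ * a ⬝ᵥ (σ.permMatrix R *ᵥ b) := by
        gcongr with σ
        · exact hw_nonneg σ
        · exact hσ σ
    _ = a ⬝ᵥ (P *ᵥ b) := by
        simp only [← hPw, sum_mulVec, smul_mulVec, dotProduct_sum, dotProduct_smul, smul_eq_mul]

namespace Matrix

variable {n 𝕜 : Type*} [Fintype n] [DecidableEq n] [RCLike 𝕜]

theorem map_norm_sq_mem_doublyStochastic {V : Matrix n n 𝕜} (hV : V ∈ unitaryGroup n 𝕜) :
    V.map (‖·‖ ^ 2) ∈ doublyStochastic ℝ n := by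
  have row (i : n) : ∑ j, ‖V i j‖ ^ 2 = 1 := by
    have := congr_fun₂ (mem_unitaryGroup_iff.1 hV) i i
    simp only [mul_apply, star_apply, RCLike.star_def, RCLike.mul_conj, one_apply_eq] at this
    exact_mod_cast this
  have col (j : n) : ∑ i, ‖V i j‖ ^ 2 = 1 := by
    have := congr_fun₂ (mem_unitaryGroup_iff'.1 hV) j j
    simp only [mul_apply, star_apply, RCLike.star_def, RCLike.conj_mul, one_apply_eq] at this
    exact_mod_cast this
  exact mem_doublyStochastic_iff_sum.2 ⟨fun i j => by simp only [map_apply]; positivity, row, col⟩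

theorem re_trace_diagonal_mul_conj_diagonal (a b : n → ℝ) (V : Matrix n n 𝕜) :
    RCLike.re (trace (diagonal (RCLike.ofReal ∘ a) * (V * diagonal (RCLike.ofReal ∘ b) * Vᴴ))) =
      a ⬝ᵥ (V.map (‖·‖ ^ 2) *ᵥ b) := by
  have hentry (i j : n) : V i j * (b j : 𝕜) * star (V i j) = ((‖V i j‖ ^ 2 * b j : ℝ) : 𝕜) := by
    rw [mul_right_comm, RCLike.star_def, RCLike.mul_conj]
    push_cast
    ring
  simp only [trace, diag, diagonal_mul]
  simp only [mul_apply, diagonal_apply, mul_ite, mul_zero, Finset.sum_ite_eq', Finset.mem_univ,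
    if_true, conjTranspose_apply, Function.comp_apply, hentry, dotProduct, mulVec, map_apply]
  simp only [← RCLike.ofReal_sum, ← RCLike.ofReal_mul, RCLike.ofReal_re]

namespace IsHermitian

variable {H : Matrix n n 𝕜} (hH : H.IsHermitian)

theorem re_trace_cfc_mul_conj (f : ℝ → ℝ) (U : Matrix n n 𝕜) :
    RCLike.re (trace (hH.cfc f * (Uᴴ * H * U))) =
      (f ∘ hH.eigenvalues) ⬝ᵥ
        (((hH.eigenvectorUnitary : Matrix n n 𝕜)ᴴ * Uᴴ * hH.eigenvectorUnitary).map (‖·‖ ^ 2) *ᵥ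
          hH.eigenvalues) := by
  set W : Matrix n n 𝕜 := ↑hH.eigenvectorUnitary
  set Y : Matrix n n 𝕜 := Wᴴ * Uᴴ * W
  have hWW : W * Wᴴ = 1 := mem_unitaryGroup_iff.1 hH.eigenvectorUnitary.2
  have hdiag : Wᴴ * H * W = diagonal (RCLike.ofReal ∘ hH.eigenvalues) := by
    simpa [W, star_eq_conjTranspose] using hH.conjStarAlgAut_star_eigenvectorUnitary
  have hconj : Wᴴ * (Uᴴ * H * U) * W = Y * (Wᴴ * H * W) * Yᴴ := by
    simp only [Y, conjTranspose_mul, conjTranspose_conjTranspose, mul_assoc]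
    simp only [← mul_assoc W, hWW, one_mul]
  have hcycle (A B : Matrix n n 𝕜) : trace (W * A * Wᴴ * B) = trace (A * (Wᴴ * B * W)) := by
    simp only [mul_assoc]
    rw [trace_mul_comm]
    simp only [mul_assoc]
  rw [IsHermitian.cfc, Unitary.conjStarAlgAut_apply, star_eq_conjTranspose,
    hcycle, hconj, hdiag, re_trace_diagonal_mul_conj_diagonal]

theorem re_trace_cfc_mul_le_re_trace_cfc_mul_conj {f : ℝ → ℝ} (hf : Antitone f)
    {U : Matrix n n 𝕜} (hU : U ∈ unitaryGroup n 𝕜) :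
    RCLike.re (trace (hH.cfc f * H)) ≤ RCLike.re (trace (hH.cfc f * (Uᴴ * H * U))) := by
  have hunconj := hH.re_trace_cfc_mul_conj f 1
  set W : Matrix n n 𝕜 := ↑hH.eigenvectorUnitary
  have hWW : Wᴴ * W = 1 := mem_unitaryGroup_iff'.1 hH.eigenvectorUnitary.2
  have hY : Wᴴ * Uᴴ * W ∈ unitaryGroup n 𝕜 := by
    have hW : W ∈ unitaryGroup n 𝕜 := hH.eigenvectorUnitary.2
    simpa only [star_eq_conjTranspose] using
      mul_mem (mul_mem (Unitary.star_mem hW) (Unitary.star_mem hU)) hW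
  simp only [conjTranspose_one, one_mul, mul_one, hWW] at hunconj
  rw [hunconj, re_trace_cfc_mul_conj]
  simpa using ((monovary_self hH.eigenvalues).comp_antitone_left hf).dotProduct_le_dotProduct_mulVec
    (map_norm_sq_mem_doublyStochastic hY)

theorem exp_cfc (g : ℝ → ℝ) : NormedSpace.exp (hH.cfc g) = hH.cfc (Real.exp ∘ g) := by
  have hexp (x : ℝ) : NormedSpace.exp (x : 𝕜) = (Real.exp x : 𝕜) := by
    simpa [Real.exp_eq_exp_ℝ, RCLike.algebraMap_eq_ofReal] using
      (algebraMap_exp_comm (𝔸 := 𝕜) x).symm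
  rw [IsHermitian.cfc, IsHermitian.cfc, Unitary.conjStarAlgAut_apply, Unitary.conjStarAlgAut_apply]
  set W : Matrix n n 𝕜 := ↑hH.eigenvectorUnitary
  have hW : IsUnit W := (Unitary.toUnits hH.eigenvectorUnitary).isUnit
  have hWinv : W⁻¹ = star W := inv_eq_left_inv (mem_unitaryGroup_iff'.1 hH.eigenvectorUnitary.2)
  rw [← hWinv, exp_conj _ _ hW, exp_diagonal]
  congr 3
  ext i
  simp [hexp]

theorem exp_smul_eq_cfc (t : ℝ) :
    NormedSpace.exp ((t : 𝕜) • H) = hH.cfc (Real.exp ∘ (t * ·)) := by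
  rw [← hH.exp_cfc, ← hH.cfc_eq, cfc_const_mul_id t H hH.isSelfAdjoint,
    RCLike.real_smul_eq_coe_smul (K := 𝕜)]

end IsHermitian

end Matrix

/-- **Gibbs states are passive.**
For an `n × n` Hermitian complex matrix `H`, an inverse temperature `β ≥ 0` and any
unitary `U`, one has `Tr(exp(-βH) · U* H U) ≥ Tr(exp(-βH) · H)`; both traces are real,
and we compare their real parts. -/
theorem gibbs_state_passive {n : ℕ}
    (H : Matrix (Fin n) (Fin n) ℂ) (hH : H.IsHermitian)
    (β : ℝ) (hβ : 0 ≤ β)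
    (U : Matrix (Fin n) (Fin n) ℂ) (hU : U ∈ Matrix.unitaryGroup (Fin n) ℂ) :
    (Matrix.trace (exp ((-β : ℂ) • H) * H)).re ≤
      (Matrix.trace (exp ((-β : ℂ) • H) * (Uᴴ * H * U))).re := by
  have hanti : Antitone (Real.exp ∘ (-β * ·)) :=
    Real.exp_monotone.comp_antitone fun _ _ hxy => mul_le_mul_of_nonpos_left hxy (neg_nonpos.2 hβ)
  have hgibbs : exp ((-β : ℂ) • H) = hH.cfc (Real.exp ∘ (-β * ·)) := by
    exact_mod_cast hH.exp_smul_eq_cfc (-β)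
  rw [hgibbs]
  exact hH.re_trace_cfc_mul_le_re_trace_cfc_mul_conj hanti hU
end

section
/- Abstract form of Bloch's theorem for equilibrium states: let H and J be n×n Hermitian complex matrices, let β ≥ 0, and let c > 0 and ε ≥ 0 be real numbers. Suppose there exist unitary n×n matrices U₊ and U₋ such that ‖U₊* H U₊ − H − c·J‖ ≤ ε and ‖U₋* H U₋ − H + c·J‖ ≤ ε. Then the Gibbs expectation of the current satisfies |Tr(J·exp(−βH))/Tr(exp(−βH))| ≤ ε/c. -/
/-!
Gibbs states are passive: `Tr (Uᴴ H U ρ) ≥ Tr (H ρ)` for `ρ = exp (-β H)` and every unitary `U`.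
In an eigenbasis `V` of `H` this reads `∑ⱼ (∑ᵢ |Wᵢⱼ|² λᵢ) e^{-βλⱼ} ≥ ∑ⱼ λⱼ e^{-βλⱼ}` with
`W = Vᴴ U V`; the squared moduli of a unitary form a doubly stochastic matrix, and the inequality
follows from convexity of `exp`. Writing `U₊ᴴ H U₊ - H = c J + K` with `‖K‖ ≤ ε` and using
`|Tr (K ρ)| ≤ ‖K‖ Tr ρ`, passivity gives `c Tr (J ρ) ≥ -ε Tr ρ`, and `U₋` gives the opposite bound.
Since `J` is Hermitian, `Tr (J ρ)` is real.
-/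

open scoped Matrix Matrix.Norms.L2Operator
open NormedSpace

namespace Matrix

variable {n : Type*} [Fintype n]

lemma IsHermitian.ofReal_re_trace_mul {𝕜 : Type*} [RCLike 𝕜] {A B : Matrix n n 𝕜}
    (hA : A.IsHermitian) (hB : B.IsHermitian) :
    (RCLike.re (trace (A * B)) : 𝕜) = trace (A * B) := by
  rw [← RCLike.conj_eq_iff_re, ← RCLike.star_def, ← trace_conjTranspose, conjTranspose_mul,
    hA.eq, hB.eq, trace_mul_comm]

variable [DecidableEq n]

section RCLike

variable {𝕜 : Type*} [RCLike 𝕜]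

lemma norm_apply_le_l2_opNorm {m : Type*} [Fintype m] (A : Matrix m n 𝕜)
    (i : m) (j : n) : ‖A i j‖ ≤ ‖A‖ :=
  calc ‖A i j‖ = ‖(A *ᵥ Pi.single j 1) i‖ := by simp
    _ ≤ ‖(EuclideanSpace.equiv m 𝕜).symm (A *ᵥ Pi.single j 1)‖ :=
      PiLp.norm_apply_le ((EuclideanSpace.equiv m 𝕜).symm (A *ᵥ Pi.single j 1)) i
    _ ≤ ‖A‖ := by simpa using l2_opNorm_mulVec A (EuclideanSpace.single j 1)

lemma norm_conjTranspose_mul_mul_apply_le {V : Matrix n n 𝕜}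
    (hV : V ∈ unitaryGroup n 𝕜) (A : Matrix n n 𝕜) (j : n) : ‖(Vᴴ * A * V) j j‖ ≤ ‖A‖ := by
  refine (norm_apply_le_l2_opNorm _ j j).trans_eq ?_
  rw [CStarRing.norm_mul_mem_unitary _ hV, ← star_eq_conjTranspose,
    CStarRing.norm_mem_unitary_mul _ (Unitary.star_mem hV)]

lemma conjTranspose_mul_diagonal_mul_apply_self (W : Matrix n n 𝕜)
    (μ : n → ℝ) (j : n) :
    (Wᴴ * diagonal (RCLike.ofReal ∘ μ) * W : Matrix n n 𝕜) j j =
      ((∑ i, ‖W i j‖ ^ 2 * μ i : ℝ) : 𝕜) := by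
  rw [mul_apply]
  simp only [mul_diagonal, conjTranspose_apply, Function.comp_apply]
  push_cast
  refine Finset.sum_congr rfl fun i _ => ?_
  rw [← RCLike.conj_mul, RCLike.star_def]
  ring

lemma of_norm_sq_mem_doublyStochastic {W : Matrix n n 𝕜}
    (hW : W ∈ unitaryGroup n 𝕜) : of (fun i j => ‖W i j‖ ^ 2) ∈ doublyStochastic ℝ n := by
  have sum_col (X : Matrix n n 𝕜) (hX : Xᴴ * X = 1) (j : n) : ∑ i, ‖X i j‖ ^ 2 = 1 := by
    have h := conjTranspose_mul_diagonal_mul_apply_self X 1 j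
    have hone : (RCLike.ofReal ∘ (1 : n → ℝ) : n → 𝕜) = fun _ => 1 := by ext; simp
    rw [hone, diagonal_one, mul_one, hX, one_apply_eq, ← RCLike.ofReal_one, RCLike.ofReal_inj] at h
    simpa using h.symm
  refine mem_doublyStochastic_iff_sum.2 ⟨fun i j => sq_nonneg _, fun i => ?_, fun j => ?_⟩
  · simpa using sum_col Wᴴ (by
      rw [conjTranspose_conjTranspose, ← star_eq_conjTranspose]
      exact mem_unitaryGroup_iff.1 hW) i
  · exact sum_col W (mem_unitaryGroup_iff'.1 hW) j

end RCLike

lemma trace_mul_mul_diagonal_mul {R : Type*} [CommSemiring R]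
    (A V W : Matrix n n R) (d : n → R) :
    trace (A * (V * diagonal d * W)) = ∑ j, (W * A * V) j j * d j := by
  rw [← mul_assoc, ← mul_assoc, trace_mul_comm, ← mul_assoc, ← mul_assoc]
  simp [trace, mul_diagonal]

section DoublyStochastic

variable {B : Matrix n n ℝ}

lemma sum_sum_mul_left_of_mem_doublyStochastic (hB : B ∈ doublyStochastic ℝ n) (x : n → ℝ) :
    ∑ j, ∑ i, B i j * x i = ∑ i, x i := by
  rw [Finset.sum_comm]
  simp [← Finset.sum_mul, sum_row_of_mem_doublyStochastic hB]

lemma sum_sum_mul_right_of_mem_doublyStochastic (hB : B ∈ doublyStochastic ℝ n) (x : n → ℝ) :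
    ∑ j, ∑ i, B i j * x j = ∑ j, x j := by
  simp [← Finset.sum_mul, sum_col_of_mem_doublyStochastic hB]

lemma sum_mul_exp_le_of_mem_doublyStochastic (hB : B ∈ doublyStochastic ℝ n) (lam : n → ℝ)
    {β : ℝ} (hβ : 0 ≤ β) :
    ∑ j, lam j * Real.exp (-β * lam j) ≤ ∑ j, (∑ i, B i j * lam i) * Real.exp (-β * lam j) := by
  rcases hβ.eq_or_lt with rfl | hβ
  · simp [sum_sum_mul_left_of_mem_doublyStochastic hB]
  set d : n → ℝ := fun j => Real.exp (-β * lam j)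
  -- `exp` lies above its tangent lines; weighted by `B`, the left side sums to zero (`balance`).
  have tangent (i j : n) : d j - d i ≤ β * ((lam i - lam j) * d j) := by
    have hd : d i = d j * Real.exp (-β * (lam i - lam j)) := by
      simp only [d, ← Real.exp_add]; ring_nf
    nlinarith [Real.add_one_le_exp (-β * (lam i - lam j)), Real.exp_pos (-β * lam j)]
  have balance : ∑ j, ∑ i, B i j * (d j - d i) = 0 := by
    simp only [mul_sub, Finset.sum_sub_distrib, sum_sum_mul_left_of_mem_doublyStochastic hB,
      sum_sum_mul_right_of_mem_doublyStochastic hB, sub_self]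
  have gap : ∑ j, (∑ i, B i j * lam i) * d j - ∑ j, lam j * d j =
      ∑ j, ∑ i, B i j * ((lam i - lam j) * d j) := by
    rw [← sum_sum_mul_right_of_mem_doublyStochastic hB (fun j => lam j * d j),
      ← Finset.sum_sub_distrib]
    simp only [Finset.sum_mul, ← Finset.sum_sub_distrib]
    congr! 2 with j _ i _
    ring
  have : 0 ≤ β * ∑ j, ∑ i, B i j * ((lam i - lam j) * d j) := by
    rw [← balance, Finset.mul_sum]
    refine Finset.sum_le_sum fun j _ => ?_
    rw [Finset.mul_sum]
    refine Finset.sum_le_sum fun i _ => ?_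
    rw [mul_left_comm]
    exact mul_le_mul_of_nonneg_left (tangent i j) (nonneg_of_mem_doublyStochastic hB)
  rw [← sub_nonneg, gap]
  exact nonneg_of_mul_nonneg_right this hβ

end DoublyStochastic

namespace IsHermitian

variable {H : Matrix n n ℂ}

lemma exp_ofReal_smul_eq (hH : H.IsHermitian) (t : ℝ) :
    NormedSpace.exp ((t : ℂ) • H) = (hH.eigenvectorUnitary : Matrix n n ℂ) *
      diagonal (fun i => (Real.exp (t * hH.eigenvalues i) : ℂ)) *
        (hH.eigenvectorUnitary : Matrix n n ℂ)ᴴ := by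
  have hVinv :
      (hH.eigenvectorUnitary : Matrix n n ℂ)⁻¹ = star (hH.eigenvectorUnitary : Matrix n n ℂ) :=
    inv_eq_left_inv (Unitary.coe_star_mul_self hH.eigenvectorUnitary)
  conv_lhs => rw [hH.spectral_theorem]
  rw [Unitary.conjStarAlgAut_apply, ← smul_mul_assoc, ← mul_smul_comm, ← diagonal_smul, ← hVinv,
    exp_conj _ _ Unitary.isUnit_coe, exp_diagonal, hVinv, star_eq_conjTranspose]
  congr
  ext i
  simp [← Complex.exp_eq_exp_ℂ]

lemma trace_exp_ofReal_smul (hH : H.IsHermitian) (t : ℝ) :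
    trace (NormedSpace.exp ((t : ℂ) • H)) = ((∑ i, Real.exp (t * hH.eigenvalues i) : ℝ) : ℂ) := by
  rw [hH.exp_ofReal_smul_eq, trace_mul_comm, ← mul_assoc, ← star_eq_conjTranspose,
    Unitary.coe_star_mul_self, one_mul, trace_diagonal]
  push_cast
  rfl

lemma norm_trace_mul_exp_ofReal_smul_le (hH : H.IsHermitian) (t : ℝ) (K : Matrix n n ℂ) :
    ‖trace (K * NormedSpace.exp ((t : ℂ) • H))‖ ≤
      ‖K‖ * ‖trace (NormedSpace.exp ((t : ℂ) • H))‖ := by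
  rw [hH.trace_exp_ofReal_smul, Complex.norm_real, Real.norm_of_nonneg (by positivity),
    hH.exp_ofReal_smul_eq, trace_mul_mul_diagonal_mul, Finset.mul_sum]
  refine (norm_sum_le _ _).trans (Finset.sum_le_sum fun j _ => ?_)
  rw [norm_mul, Complex.norm_real, Real.norm_of_nonneg (Real.exp_pos _).le]
  exact mul_le_mul_of_nonneg_right
    (norm_conjTranspose_mul_mul_apply_le hH.eigenvectorUnitary.2 K j) (Real.exp_pos _).le

lemma re_trace_mul_exp_le_conj (hH : H.IsHermitian) {β : ℝ} (hβ : 0 ≤ β) {U : Matrix n n ℂ}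
    (hU : U ∈ unitaryGroup n ℂ) :
    (trace (H * NormedSpace.exp ((-β : ℂ) • H))).re ≤
      (trace (Uᴴ * H * U * NormedSpace.exp ((-β : ℂ) • H))).re := by
  set V : Matrix n n ℂ := (hH.eigenvectorUnitary : Matrix n n ℂ)
  have hV : V ∈ unitaryGroup n ℂ := hH.eigenvectorUnitary.2
  have hVV (X : Matrix n n ℂ) : V * (Vᴴ * X) = X := by
    rw [← mul_assoc, ← star_eq_conjTranspose, mem_unitaryGroup_iff.1 hV, one_mul]
  set W := Vᴴ * U * V
  have hW : W ∈ unitaryGroup n ℂ :=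
    Submonoid.mul_mem _ (Submonoid.mul_mem _ (Unitary.star_mem hV) hU) hV
  have hdiag : Vᴴ * H * V = diagonal (RCLike.ofReal ∘ hH.eigenvalues) := by
    simpa [V, star_eq_conjTranspose] using hH.conjStarAlgAut_star_eigenvectorUnitary
  have hconj : Vᴴ * (Uᴴ * H * U) * V = Wᴴ * diagonal (RCLike.ofReal ∘ hH.eigenvalues) * W := by
    simp only [← hdiag, W, conjTranspose_mul, conjTranspose_conjTranspose, mul_assoc, hVV]
  rw [← Complex.ofReal_neg, hH.exp_ofReal_smul_eq, trace_mul_mul_diagonal_mul,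
    trace_mul_mul_diagonal_mul, hdiag, hconj]
  simp only [conjTranspose_mul_diagonal_mul_apply_self, diagonal_apply_eq, Function.comp_apply]
  simp only [RCLike.ofReal_eq_complex_ofReal, ← Complex.ofReal_mul, Complex.re_sum,
    Complex.ofReal_re]
  exact sum_mul_exp_le_of_mem_doublyStochastic (of_norm_sq_mem_doublyStochastic hW)
    hH.eigenvalues hβ

lemma neg_le_mul_re_trace_mul_exp_of_norm_conj_sub_le (hH : H.IsHermitian) {β : ℝ} (hβ : 0 ≤ β)
    {U J : Matrix n n ℂ} (hU : U ∈ unitaryGroup n ℂ) {s ε : ℝ}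
    (hUJ : ‖Uᴴ * H * U - H - (s : ℂ) • J‖ ≤ ε) :
    -(ε * ‖trace (NormedSpace.exp ((-β : ℂ) • H))‖) ≤
      s * (trace (J * NormedSpace.exp ((-β : ℂ) • H))).re := by
  set ρ := NormedSpace.exp ((-β : ℂ) • H)
  set K := Uᴴ * H * U - H - (s : ℂ) • J
  have passive := hH.re_trace_mul_exp_le_conj hβ hU
  have small : |(trace (K * ρ)).re| ≤ ε * ‖trace ρ‖ := by
    have h := hH.norm_trace_mul_exp_ofReal_smul_le (-β) K
    rw [Complex.ofReal_neg] at h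
    exact (Complex.abs_re_le_norm _).trans (h.trans (by gcongr))
  have twist : Uᴴ * H * U = H + (s : ℂ) • J + K := by
    simp only [K]; abel
  rw [twist, add_mul, add_mul, trace_add, trace_add, smul_mul_assoc, trace_smul, Complex.add_re,
    Complex.add_re, smul_eq_mul, Complex.re_ofReal_mul] at passive
  linarith [abs_le.1 small]

end IsHermitian

end Matrix

/-- **Abstract Bloch's theorem for equilibrium (Gibbs) states.**
If `H`, `J` are Hermitian, `β ≥ 0`, `c > 0`, `ε ≥ 0`, and there are unitaries
`U₊`, `U₋` with `‖U₊* H U₊ - H - c J‖ ≤ ε` and `‖U₋* H U₋ - H + c J‖ ≤ ε`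
(operator norm), then the Gibbs expectation of the current satisfies
`|Tr(J exp(-βH)) / Tr(exp(-βH))| ≤ ε / c`. -/
theorem bloch_theorem_gibbs_state {n : ℕ}
    (H J : Matrix (Fin n) (Fin n) ℂ) (hH : H.IsHermitian) (hJ : J.IsHermitian)
    (β : ℝ) (hβ : 0 ≤ β)
    (c ε : ℝ) (hc : 0 < c) (hε : 0 ≤ ε)
    (Uplus Uminus : Matrix (Fin n) (Fin n) ℂ)
    (hUplus : Uplus ∈ Matrix.unitaryGroup (Fin n) ℂ)
    (hUminus : Uminus ∈ Matrix.unitaryGroup (Fin n) ℂ)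
    (hplus : ‖Uplusᴴ * H * Uplus - H - (c : ℂ) • J‖ ≤ ε)
    (hminus : ‖Uminusᴴ * H * Uminus - H + (c : ℂ) • J‖ ≤ ε) :
    ‖Matrix.trace (J * exp ((-β : ℂ) • H)) /
      Matrix.trace (exp ((-β : ℂ) • H))‖ ≤ ε / c := by
  have lower := hH.neg_le_mul_re_trace_mul_exp_of_norm_conj_sub_le hβ hUplus hplus
  have upper := hH.neg_le_mul_re_trace_mul_exp_of_norm_conj_sub_le hβ hUminus (J := J) (s := -c) (ε := ε)
    (by rw [Complex.ofReal_neg, neg_smul, sub_neg_eq_add]; exact hminus)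
  have hreal := hJ.ofReal_re_trace_mul (hH.smul (k := (-β : ℂ)) (by simp [IsSelfAdjoint])).exp
  have hbound : c * |(Matrix.trace (J * exp ((-β : ℂ) • H))).re| ≤
      ε * ‖Matrix.trace (exp ((-β : ℂ) • H))‖ := by
    rw [← abs_of_pos hc, ← abs_mul]
    exact abs_le.2 ⟨lower, by linarith⟩
  rw [← hreal, norm_div, RCLike.norm_ofReal, RCLike.re_eq_complex_re]
  refine div_le_of_le_mul₀ (norm_nonneg _) (div_nonneg hε hc.le) ?_
  rw [div_mul_eq_mul_div, le_div_iff₀ hc]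
  linarith
end

section
/- Bound on the Duhamel two-point function: let H be an n×n Hermitian complex matrix, β ≥ 0 a real number, and O₁, O₂ arbitrary n×n complex matrices. Then |∫₀¹ Tr(O₁ · exp(−zβH) · O₂ · exp(−(1−z)βH)) dz| ≤ ‖O₁‖ · ‖O₂‖ · Tr(exp(−βH)). In particular, the normalized Duhamel two-point function (O₁, O₂) = (1/Tr(exp(−βH))) ∫₀¹ Tr(O₁ e^{−zβH} O₂ e^{−(1−z)βH}) dz satisfies |(O₁, O₂)| ≤ ‖O₁‖·‖O₂‖. -/
/-!
Diagonalise `H = U diag(λ) U*` and put `P = U* O₁ U`, `Q = U* O₂ U`, so that `‖P‖ = ‖O₁‖`,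
`‖Q‖ = ‖O₂‖` and the integrand is `∑ i j, P i j e^{-zβλ_j} Q j i e^{-(1-z)βλ_i}`. Convexity of
`exp` bounds the weight `e^{-zβλ_j} e^{-(1-z)βλ_i}` by `(1-z) e^{-βλ_i} + z e^{-βλ_j}`, and
Cauchy–Schwarz bounds every row-against-column sum `∑ j, |P i j| |Q j i|` by `‖P‖ ‖Q‖`.
Hence the integrand is bounded by `‖O₁‖ ‖O₂‖ ∑ i, e^{-βλ_i} = ‖O₁‖ ‖O₂‖ Tr e^{-βH}` for every
`z ∈ [0, 1]`, and so is its integral over `[0, 1]`.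
-/

open scoped Matrix Matrix.Norms.L2Operator
open NormedSpace

namespace Matrix

variable {𝕜 m n : Type*} [RCLike 𝕜] [Fintype m] [Fintype n] [DecidableEq n]

theorem trace_mul_diagonal_mul_diagonal {R : Type*} [CommSemiring R] [DecidableEq m]
    (A : Matrix m n R) (d : n → R) (B : Matrix n m R) (e : m → R) :
    trace (A * diagonal d * B * diagonal e) = ∑ i, ∑ j, A i j * d j * B j i * e i := by
  simp [trace, mul_apply, diagonal_apply, Finset.sum_mul]

theorem col_sum_norm_sq_le_l2_opNorm_sq (A : Matrix m n 𝕜) (j : n) :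
    ∑ i, ‖A i j‖ ^ 2 ≤ ‖A‖ ^ 2 := by
  have h := A.l2_opNorm_mulVec (EuclideanSpace.single j 1)
  have hcol : ‖(EuclideanSpace.equiv m 𝕜).symm (A *ᵥ EuclideanSpace.single j 1)‖ ^ 2 =
      ∑ i, ‖A i j‖ ^ 2 := by
    simp [EuclideanSpace.norm_sq_eq]
  simp only [EuclideanSpace.single, PiLp.norm_single, norm_one, mul_one] at h
  exact hcol ▸ pow_le_pow_left₀ (norm_nonneg _) h 2

theorem row_sum_norm_sq_le_l2_opNorm_sq [DecidableEq m] (A : Matrix m n 𝕜) (i : m) :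
    ∑ j, ‖A i j‖ ^ 2 ≤ ‖A‖ ^ 2 := by
  simpa [l2_opNorm_conjTranspose] using Aᴴ.col_sum_norm_sq_le_l2_opNorm_sq i

theorem sum_norm_mul_norm_le_l2_opNorm_mul [DecidableEq m] (A : Matrix m n 𝕜)
    (B : Matrix n m 𝕜) (i : m) :
    ∑ j, ‖A i j‖ * ‖B j i‖ ≤ ‖A‖ * ‖B‖ := by
  calc ∑ j, ‖A i j‖ * ‖B j i‖
      ≤ √(∑ j, ‖A i j‖ ^ 2) * √(∑ j, ‖B j i‖ ^ 2) := Real.sum_mul_le_sqrt_mul_sqrt _ _ _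
    _ ≤ ‖A‖ * ‖B‖ := by
      gcongr
      · exact Real.sqrt_le_iff.2 ⟨norm_nonneg _, A.row_sum_norm_sq_le_l2_opNorm_sq i⟩
      · exact Real.sqrt_le_iff.2 ⟨norm_nonneg _, B.col_sum_norm_sq_le_l2_opNorm_sq i⟩

theorem sum_sum_norm_mul_norm_mul_add_le [DecidableEq m] (A : Matrix m n 𝕜) (B : Matrix n m 𝕜)
    {u : m → ℝ} {v : n → ℝ} (hu : ∀ i, 0 ≤ u i) (hv : ∀ j, 0 ≤ v j) :
    ∑ i, ∑ j, ‖A i j‖ * ‖B j i‖ * (u i + v j) ≤ ‖A‖ * ‖B‖ * (∑ i, u i + ∑ j, v j) := by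
  have hrows : ∑ i, (∑ j, ‖A i j‖ * ‖B j i‖) * u i ≤ ∑ i, ‖A‖ * ‖B‖ * u i :=
    Finset.sum_le_sum fun i _ =>
      mul_le_mul_of_nonneg_right (A.sum_norm_mul_norm_le_l2_opNorm_mul B i) (hu i)
  have hcols : ∑ j, (∑ i, ‖B j i‖ * ‖A i j‖) * v j ≤ ∑ j, ‖B‖ * ‖A‖ * v j :=
    Finset.sum_le_sum fun j _ =>
      mul_le_mul_of_nonneg_right (B.sum_norm_mul_norm_le_l2_opNorm_mul A j) (hv j)
  simp only [mul_add, Finset.sum_add_distrib, Finset.mul_sum, Finset.sum_mul] at hrows hcols ⊢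
  refine add_le_add hrows (le_of_eq_of_le ?_ (hcols.trans_eq ?_))
  · rw [Finset.sum_comm]
    simp only [mul_comm ‖A _ _‖]
  · simp only [mul_comm ‖B‖]

theorem norm_trace_mul_diagonal_mul_diagonal_le [DecidableEq m] (A : Matrix m n 𝕜)
    (B : Matrix n m 𝕜) {d : n → 𝕜} {e : m → 𝕜} {u : m → ℝ} {v : n → ℝ}
    (hu : ∀ i, 0 ≤ u i) (hv : ∀ j, 0 ≤ v j) (hde : ∀ i j, ‖d j‖ * ‖e i‖ ≤ u i + v j) :
    ‖trace (A * diagonal d * B * diagonal e)‖ ≤ ‖A‖ * ‖B‖ * (∑ i, u i + ∑ j, v j) := by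
  rw [trace_mul_diagonal_mul_diagonal]
  refine (norm_sum_le _ _).trans <| le_trans ?_ (A.sum_sum_norm_mul_norm_mul_add_le B hu hv)
  refine Finset.sum_le_sum fun i _ => (norm_sum_le _ _).trans <| Finset.sum_le_sum fun j _ => ?_
  calc ‖A i j * d j * B j i * e i‖ = ‖A i j‖ * ‖B j i‖ * (‖d j‖ * ‖e i‖) := by
        simp only [norm_mul]; ring
    _ ≤ ‖A i j‖ * ‖B j i‖ * (u i + v j) := by gcongr; exact hde i j

theorem norm_trace_mul_diagonal_exp_mul_diagonal_exp_le (A B : Matrix n n 𝕜) (x : n → ℝ)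
    (t : ℝ) {z : ℝ} (hz₀ : 0 ≤ z) (hz₁ : z ≤ 1) :
    ‖trace (A * diagonal (fun j => (Real.exp (z * t * x j) : 𝕜)) * B *
        diagonal (fun i => (Real.exp ((1 - z) * t * x i) : 𝕜)))‖ ≤
      ‖A‖ * ‖B‖ * ∑ i, Real.exp (t * x i) := by
  have hconv (i j : n) : Real.exp (z * t * x j) * Real.exp ((1 - z) * t * x i) ≤
      (1 - z) * Real.exp (t * x i) + z * Real.exp (t * x j) := by
    have h := convexOn_exp.2 (Set.mem_univ (t * x i)) (Set.mem_univ (t * x j))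
      (sub_nonneg.2 hz₁) hz₀ (by ring)
    simp only [smul_eq_mul] at h
    rwa [← Real.exp_add, show z * t * x j + (1 - z) * t * x i =
      (1 - z) * (t * x i) + z * (t * x j) by ring]
  calc _ ≤ ‖A‖ * ‖B‖ * (∑ i, (1 - z) * Real.exp (t * x i) + ∑ j, z * Real.exp (t * x j)) := by
        refine norm_trace_mul_diagonal_mul_diagonal_le A B (fun i => by positivity)
          (fun j => by positivity) fun i j => ?_
        simpa only [RCLike.norm_ofReal, abs_of_pos (Real.exp_pos _)] using hconv i j
    _ = ‖A‖ * ‖B‖ * ∑ i, Real.exp (t * x i) := by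
        rw [← Finset.mul_sum, ← Finset.mul_sum]; ring

namespace IsHermitian

theorem trace_cfc {H : Matrix n n 𝕜} (hH : H.IsHermitian) (f : ℝ → ℝ) :
    trace (hH.cfc f) = ∑ i, (f (hH.eigenvalues i) : 𝕜) := by
  rw [IsHermitian.cfc, Unitary.conjStarAlgAut_apply, trace_mul_cycle, Unitary.coe_star_mul_self,
    one_mul, trace_diagonal]
  rfl

variable {H : Matrix n n ℂ}

theorem exp_ofReal_smul (hH : H.IsHermitian) (t : ℝ) :
    NormedSpace.exp ((t : ℂ) • H) = hH.cfc (fun x => Real.exp (t * x)) := by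
  rw [← hH.cfc_eq, Complex.coe_smul, ← CFC.real_exp_eq_normedSpace_exp,
    ← cfc_comp_smul t Real.exp H]
  rfl

theorem re_trace_exp_ofReal_smul (hH : H.IsHermitian) (t : ℝ) :
    (trace (NormedSpace.exp ((t : ℂ) • H))).re = ∑ i, Real.exp (t * hH.eigenvalues i) := by
  rw [hH.exp_ofReal_smul, hH.trace_cfc, Complex.re_sum]
  exact Finset.sum_congr rfl fun i _ => Complex.ofReal_re _

theorem norm_trace_mul_exp_mul_exp_le (hH : H.IsHermitian) (O₁ O₂ : Matrix n n ℂ) (t : ℝ)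
    {z : ℝ} (hz₀ : 0 ≤ z) (hz₁ : z ≤ 1) :
    ‖trace (O₁ * NormedSpace.exp (((z * t : ℝ) : ℂ) • H) * O₂ *
        NormedSpace.exp ((((1 - z) * t : ℝ) : ℂ) • H))‖ ≤
      ‖O₁‖ * ‖O₂‖ * (trace (NormedSpace.exp ((t : ℂ) • H))).re := by
  set U : Matrix n n ℂ := (hH.eigenvectorUnitary : Matrix n n ℂ)
  have hconj (O : Matrix n n ℂ) : ‖star U * O * U‖ = ‖O‖ := by
    rw [CStarRing.norm_mul_coe_unitary, ← Unitary.coe_star, CStarRing.norm_coe_unitary_mul]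
  have hcycle (D₁ D₂ : Matrix n n ℂ) :
      trace (O₁ * (U * D₁ * star U) * O₂ * (U * D₂ * star U)) =
        trace (star U * O₁ * U * D₁ * (star U * O₂ * U) * D₂) := by
    rw [show star U * O₁ * U * D₁ * (star U * O₂ * U) * D₂ =
        star U * (O₁ * U * D₁ * star U * O₂ * U * D₂) by simp only [mul_assoc],
      trace_mul_comm (star U)]
    simp only [mul_assoc]
  rw [hH.re_trace_exp_ofReal_smul, hH.exp_ofReal_smul, hH.exp_ofReal_smul, IsHermitian.cfc,
    IsHermitian.cfc, Unitary.conjStarAlgAut_apply, Unitary.conjStarAlgAut_apply, hcycle,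
    ← hconj O₁, ← hconj O₂]
  exact norm_trace_mul_diagonal_exp_mul_diagonal_exp_le _ _ hH.eigenvalues t hz₀ hz₁

end IsHermitian

end Matrix

theorem duhamel_two_point_bound_general {n : ℕ}
    (H : Matrix (Fin n) (Fin n) ℂ) (hH : H.IsHermitian)
    (β : ℝ)
    (O₁ O₂ : Matrix (Fin n) (Fin n) ℂ) :
    ‖(∫ z in (0:ℝ)..1,
        Matrix.trace (O₁ * exp ((-(z : ℂ) * β) • H) * O₂ *
          exp ((-(1 - (z : ℂ)) * β) • H)))‖ ≤
      ‖O₁‖ * ‖O₂‖ * (Matrix.trace (exp ((-β : ℂ) • H))).re := by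
  have hpointwise : ∀ z ∈ Set.uIoc (0 : ℝ) 1,
      ‖Matrix.trace (O₁ * exp ((-(z : ℂ) * β) • H) * O₂ * exp ((-(1 - (z : ℂ)) * β) • H))‖ ≤
        ‖O₁‖ * ‖O₂‖ * (Matrix.trace (exp ((-β : ℂ) • H))).re := by
    rintro z ⟨hz₀, hz₁⟩
    rw [show -(z : ℂ) * β = ((z * -β : ℝ) : ℂ) by push_cast; ring,
      show -(1 - (z : ℂ)) * β = (((1 - z) * -β : ℝ) : ℂ) by push_cast; ring,
      ← Complex.ofReal_neg]
    exact hH.norm_trace_mul_exp_mul_exp_le O₁ O₂ (-β) (by simpa using hz₀.le)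
      (by simpa using hz₁)
  simpa using intervalIntegral.norm_integral_le_of_norm_le_const hpointwise

/-- **Bound on the Duhamel two-point function.**
For Hermitian `H`, `β ≥ 0` and arbitrary matrices `O₁`, `O₂`:
`|∫₀¹ Tr(O₁ exp(-zβH) O₂ exp(-(1-z)βH)) dz| ≤ ‖O₁‖ ‖O₂‖ Tr(exp(-βH))`,
with `‖·‖` the `ℓ²`-operator norm; in particular the normalized Duhamel two-point
function is bounded by `‖O₁‖ ‖O₂‖`. -/
theorem duhamel_two_point_bound {n : ℕ}
    (H : Matrix (Fin n) (Fin n) ℂ) (hH : H.IsHermitian)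
    (β : ℝ) (hβ : 0 ≤ β)
    (O₁ O₂ : Matrix (Fin n) (Fin n) ℂ) :
    ‖(∫ z in (0:ℝ)..1,
        Matrix.trace (O₁ * exp ((-(z : ℂ) * β) • H) * O₂ *
          exp ((-(1 - (z : ℂ)) * β) • H)))‖ ≤
      ‖O₁‖ * ‖O₂‖ * (Matrix.trace (exp ((-β : ℂ) • H))).re :=
  duhamel_two_point_bound_general H hH β O₁ O₂
end

section
/- Derivative of the log-partition function: let H and K be n×n Hermitian complex matrices and β a real number. Then the map λ ↦ log Tr(exp(−β(H + λK))) from ℝ to ℝ is differentiable, and its derivative at λ₀ equals −β · Tr(K · exp(−β(H + λ₀K))) / Tr(exp(−β(H + λ₀K))). -/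
/-!
Expand `Tr exp (A + sB) = ∑ₖ Tr (Xᵏ) / k!` with `X = A + sB`. The derivative of `Xᵏ` is
`∑ᵢ Xᵏ⁻¹⁻ⁱ B Xⁱ`, which does not simplify since `A` and `B` need not commute, but under the
trace cyclicity turns it into `k Tr (B Xᵏ⁻¹)`. These termwise derivatives are bounded on a ball by
the terms of an exponential series, so the series may be differentiated termwise and sums to
`Tr (B exp (A + sB))`. For Hermitian `M`, `exp M = (exp (M/2))ᴴ exp (M/2)` with `exp (M/2)`
invertible, so `exp M` is positive definite and the partition function is positive, which makes
its logarithm differentiable.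
-/

open scoped Matrix ComplexOrder Nat
open NormedSpace

theorem Nat.cast_succ_div_factorial_succ {K : Type*} [Field K] [CharZero K] (k : ℕ) :
    ((k + 1 : ℕ) : K) / (k + 1)! = (k ! : K)⁻¹ := by
  rw [Nat.factorial_succ, Nat.cast_mul,
    div_mul_cancel_left₀ (Nat.cast_ne_zero.mpr k.succ_ne_zero)]

theorem norm_mul_pow_le {𝔸 : Type*} [NormedRing 𝔸] (b x : 𝔸) (k : ℕ) :
    ‖b * x ^ k‖ ≤ ‖b‖ * ‖x‖ ^ k := by
  induction k with
  | zero => simp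
  | succ k ih =>
    rw [pow_succ, ← mul_assoc, pow_succ, ← mul_assoc]
    exact (norm_mul_le _ _).trans (by gcongr)

theorem summable_natCast_div_factorial_mul_pow_pred (C R : ℝ) :
    Summable fun k : ℕ => (k : ℝ) / k ! * (C * R ^ k.pred) := by
  refine (summable_nat_add_iff 1).mp ?_
  simp only [Nat.cast_succ_div_factorial_succ, Nat.pred_succ]
  simpa [div_eq_inv_mul, mul_comm, mul_left_comm, mul_assoc] using
    (Real.summable_pow_div_factorial R).mul_left C

section Tracial

variable {𝕂 𝔸 E : Type*} [RCLike 𝕂] [NormedRing 𝔸] [NormedAlgebra 𝕂 𝔸]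
  [NormedAddCommGroup E] [NormedSpace 𝕂 E]
  (τ : 𝔸 →L[𝕂] E)

theorem HasDerivAt.map_pow_of_tracial (hτ : ∀ x y, τ (x * y) = τ (y * x)) {x : 𝕂 → 𝔸}
    {b : 𝔸} {t : 𝕂} (hx : HasDerivAt x b t) (k : ℕ) :
    HasDerivAt (fun s => τ (x s ^ k)) ((k : 𝕂) • τ (b * x t ^ k.pred)) t := by
  refine (τ.hasFDerivAt.comp_hasDerivAt t (hx.fun_pow' k)).congr_deriv ?_
  have hcyc : ∀ i ∈ Finset.range k,
      τ (x t ^ (k.pred - i) * b * x t ^ i) = τ (b * x t ^ k.pred) := by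
    intro i hi
    rw [mul_assoc, hτ, mul_assoc, ← pow_add,
      Nat.add_sub_of_le (Nat.le_pred_of_lt (Finset.mem_range.mp hi))]
  rw [map_sum, Finset.sum_congr rfl hcyc, Finset.sum_const, Finset.card_range,
    Nat.cast_smul_eq_nsmul]

theorem hasSum_map_inv_factorial_smul_pow [CompleteSpace 𝔸] (y : 𝔸) :
    HasSum (fun k => (k ! : 𝕂)⁻¹ • τ (y ^ k)) (τ (exp y)) := by
  simpa only [map_smul] using (exp_series_hasSum_exp' (𝕂 := 𝕂) y).mapL τ

theorem hasSum_div_factorial_smul_map_mul_pow_pred [CompleteSpace 𝔸] (b y : 𝔸) :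
    HasSum (fun k : ℕ => ((k : 𝕂) / k !) • τ (b * y ^ k.pred)) (τ (b * exp y)) := by
  rw [← hasSum_nat_add_iff' 1]
  simp only [Finset.range_one, Finset.sum_singleton, Nat.cast_zero, zero_div, zero_smul,
    sub_zero, Nat.cast_succ_div_factorial_succ, Nat.pred_succ]
  exact hasSum_map_inv_factorial_smul_pow (τ.comp (ContinuousLinearMap.mul 𝕂 𝔸 b)) y

theorem hasDerivAt_map_exp_add_smul_of_tracial [CompleteSpace 𝔸] [CompleteSpace E]
    (hτ : ∀ x y, τ (x * y) = τ (y * x)) (a b : 𝔸) (t : 𝕂) :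
    HasDerivAt (fun s : 𝕂 => τ (exp (a + s • b))) (τ (b * exp (a + t • b))) t := by
  have hx : ∀ s, HasDerivAt (fun r : 𝕂 => a + r • b) b s := fun s => by
    simpa using ((hasDerivAt_id s).smul_const b).const_add a
  set x : 𝕂 → 𝔸 := fun s => a + s • b
  set R := ‖x t‖ + ‖b‖
  have hxR : ∀ s ∈ Metric.ball t 1, ‖x s‖ ≤ R := by
    intro s hs
    have hxs : x s = x t + (s - t) • b := by simp only [x, sub_smul]; abel
    rw [hxs]
    refine (norm_add_le _ _).trans ?_
    show _ ≤ ‖x t‖ + ‖b‖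
    gcongr
    rw [norm_smul]
    exact mul_le_of_le_one_left (norm_nonneg _) (mem_ball_iff_norm.mp hs).le
  have hbound : ∀ (k : ℕ), ∀ s ∈ Metric.ball t 1,
      ‖((k : 𝕂) / k !) • τ (b * x s ^ k.pred)‖ ≤ (k : ℝ) / k ! * (‖τ‖ * ‖b‖ * R ^ k.pred) := by
    intro k s hs
    rw [norm_smul, norm_div, RCLike.norm_natCast, RCLike.norm_natCast, mul_assoc ‖τ‖]
    gcongr
    refine (τ.le_opNorm _).trans ?_
    gcongr
    exact (norm_mul_pow_le _ _ _).trans (by gcongr; exact hxR s hs)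
  have hg : ∀ k s, HasDerivAt (fun s => (k ! : 𝕂)⁻¹ • τ (x s ^ k))
      (((k : 𝕂) / k !) • τ (b * x s ^ k.pred)) s := by
    intro k s
    rw [div_eq_inv_mul, ← smul_smul]
    exact ((hx s).map_pow_of_tracial τ hτ k).const_smul (k ! : 𝕂)⁻¹
  have key := hasDerivAt_tsum_of_isPreconnected
    (summable_natCast_div_factorial_mul_pow_pred (‖τ‖ * ‖b‖) R) Metric.isOpen_ball
    (convex_ball t 1).isPreconnected (fun k s _ => hg k s) hbound (Metric.mem_ball_self one_pos)
    (hasSum_map_inv_factorial_smul_pow τ (x t)).summable (Metric.mem_ball_self one_pos)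
  rw [(hasSum_div_factorial_smul_map_mul_pow_pred τ b (x t)).tsum_eq] at key
  convert key using 2 with s
  exact (hasSum_map_inv_factorial_smul_pow τ (x s)).tsum_eq.symm

end Tracial

namespace Matrix

variable {m 𝕂 : Type*} [Fintype m] [DecidableEq m] [RCLike 𝕂]

theorem hasDerivAt_trace_exp_add_smul (A B : Matrix m m 𝕂) (t : 𝕂) :
    HasDerivAt (fun s : 𝕂 => trace (exp (A + s • B))) (trace (B * exp (A + t • B))) t := by
  let : NormedRing (Matrix m m 𝕂) := Matrix.linftyOpNormedRing
  let : NormedAlgebra 𝕂 (Matrix m m 𝕂) := Matrix.linftyOpNormedAlgebra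
  -- passed by hand: instance search does not see that the uniformity of this norm is the
  -- product uniformity, for which matrices are complete
  exact @hasDerivAt_map_exp_add_smul_of_tracial _ _ _ _ _ _ _ _
    (traceLinearMap m 𝕂 𝕂).toContinuousLinearMap (FiniteDimensional.complete 𝕂 _) _
    (fun x y => trace_mul_comm x y) A B t

theorem IsHermitian.posDef_exp {M : Matrix m m 𝕂} (hM : M.IsHermitian) :
    (NormedSpace.exp M).PosDef := by
  set E := NormedSpace.exp ((2⁻¹ : ℝ) • M)
  have hE : Eᴴ = E := (hM.smul (IsSelfAdjoint.all _)).exp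
  have hsq : NormedSpace.exp M = Eᴴ * E := by
    rw [hE, ← exp_add_of_commute _ _ (Commute.refl _), ← add_smul]
    norm_num
  rw [hsq]
  exact PosDef.conjTranspose_mul_self E (mulVec_injective_iff_isUnit.mpr (isUnit_exp _))

end Matrix

/-- **Derivative of the log-partition function.**
For Hermitian `H`, `K` and real `β`, the map `λ ↦ log Tr(exp(-β(H + λK)))` is
differentiable, with derivative at `λ₀` equal to
`-β · Tr(K exp(-β(H + λ₀K))) / Tr(exp(-β(H + λ₀K)))` (all traces are real and we
work with their real parts). -/
theorem log_partition_function_hasDerivAt {n : ℕ}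
    (H K : Matrix (Fin n) (Fin n) ℂ) (hH : H.IsHermitian) (hK : K.IsHermitian)
    (β : ℝ) (lam0 : ℝ) :
    HasDerivAt
      (fun lam : ℝ =>
        Real.log ((Matrix.trace (NormedSpace.exp ((-β : ℂ) • (H + (lam : ℂ) • K)))).re))
      (-β * (Matrix.trace (K * NormedSpace.exp ((-β : ℂ) • (H + (lam0 : ℂ) • K)))).re /
        (Matrix.trace (NormedSpace.exp ((-β : ℂ) • (H + (lam0 : ℂ) • K)))).re)
      lam0 := by
  rcases isEmpty_or_nonempty (Fin n) with hn | hn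
  · simpa [Matrix.trace_eq_zero_of_isEmpty] using hasDerivAt_const lam0 (Real.log 0)
  have hZ :
      HasDerivAt (fun lam : ℝ => (Matrix.trace (exp ((-β : ℂ) • (H + (lam : ℂ) • K)))).re)
      (-β * (Matrix.trace (K * exp ((-β : ℂ) • (H + (lam0 : ℂ) • K)))).re) lam0 := by
    have h := (Matrix.hasDerivAt_trace_exp_add_smul ((-β : ℂ) • H) ((-β : ℂ) • K)
      (lam0 : ℂ)).real_of_complex
    have hsplit (c : ℂ) : (-β : ℂ) • (H + c • K) = (-β : ℂ) • H + c • (-β : ℂ) • K := by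
      rw [smul_add, smul_comm]
    simp only [hsplit, Matrix.smul_mul, Matrix.trace_smul] at h ⊢
    simpa using h
  have hherm : ((-β : ℂ) • (H + (lam0 : ℂ) • K)).IsHermitian :=
    (hH.add (hK.smul (Complex.conj_ofReal lam0))).smul (.neg (Complex.conj_ofReal β))
  have hpos : 0 < (Matrix.trace (exp ((-β : ℂ) • (H + (lam0 : ℂ) • K)))).re :=
    (Complex.pos_iff.mp hherm.posDef_exp.trace_pos).1
  exact hZ.log hpos.ne'
end

section
/- Convexity of the free energy: let A and B be n×n Hermitian complex matrices. Then the function h ↦ log Tr(exp(A + hB)) from ℝ to ℝ is convex. -/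
open scoped Matrix
open NormedSpace

/-!
The function `h ↦ log Tr exp(A + h B)` lies above a line through each of its points, with slope
the Gibbs mean `Tr(exp(A + h B) B) / Tr exp(A + h B)`; this is the Peierls–Bogoliubov inequality
`log Tr e^M + Tr(e^M V) / Tr e^M ≤ log Tr e^(M + V)`. To prove it, write `M = U D U*` with
`D = diag λ`. The diagonal entries of a Hermitian matrix `K` are averages of its eigenvalues with
weights `|W i j|²` (`W` its eigenvector unitary), so Jensen gives the Peierls inequality
`∑ i, exp (K i i) ≤ Tr e^K`; applied to `K = D + U* V U` it yields `Tr e^(M + V) ≥ ∑ i, e^(λ i + v i)`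
with `v i = (U* V U) i i`. Jensen once more, for the Gibbs weights `e^(λ i) / ∑ j, e^(λ j)`, turns
this into the inequality.
-/

theorem Real.log_sum_exp_add_mean_le {ι : Type*} [Fintype ι] [Nonempty ι] (d v : ι → ℝ) :
    Real.log (∑ i, Real.exp (d i)) + (∑ i, Real.exp (d i) * v i) / ∑ i, Real.exp (d i) ≤
      Real.log (∑ i, Real.exp (d i + v i)) := by
  set Z := ∑ i, Real.exp (d i)
  have hZ : 0 < Z := Finset.sum_pos (fun i _ => Real.exp_pos _) Finset.univ_nonempty
  have hjensen : Real.exp (∑ i, Real.exp (d i) / Z * v i) ≤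
      ∑ i, Real.exp (d i) / Z * Real.exp (v i) :=
    convexOn_exp.map_sum_le (fun i _ => by positivity)
      (by rw [← Finset.sum_div, div_self hZ.ne']) (fun i _ => Set.mem_univ _)
  have hmean : (∑ i, Real.exp (d i) * v i) / Z = ∑ i, Real.exp (d i) / Z * v i := by
    rw [Finset.sum_div]
    exact Finset.sum_congr rfl fun i _ => by ring
  have hsum : ∑ i, Real.exp (d i + v i) = Z * ∑ i, Real.exp (d i) / Z * Real.exp (v i) := by
    rw [Finset.mul_sum]
    exact Finset.sum_congr rfl fun i _ => by rw [Real.exp_add]; field_simp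
  rw [hsum, Real.log_mul hZ.ne' (by positivity), hmean]
  gcongr
  exact (Real.le_log_iff_exp_le ((Real.exp_pos _).trans_le hjensen)).2 hjensen

theorem convexOn_univ_of_forall_le_add_mul {f : ℝ → ℝ}
    (h : ∀ x, ∃ c, ∀ y, f x + c * (y - x) ≤ f y) : ConvexOn ℝ Set.univ f := by
  refine ⟨convex_univ, fun x _ y _ a b ha hb hab => ?_⟩
  obtain ⟨c, hc⟩ := h (a • x + b • y)
  obtain rfl : b = 1 - a := by linarith
  simp only [smul_eq_mul] at hc ⊢
  linear_combination a * hc x + (1 - a) * hc y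

namespace Matrix

open RCLike Unitary

variable {ι 𝕜 : Type*} [Fintype ι] [DecidableEq ι] [RCLike 𝕜]

theorem exp_unitary_conj (U : unitary (Matrix ι ι 𝕜)) (A : Matrix ι ι 𝕜) :
    exp ((U : Matrix ι ι 𝕜) * A * star (U : Matrix ι ι 𝕜)) =
      U * exp A * star (U : Matrix ι ι 𝕜) :=
  exp_units_conj (toUnits U) A

theorem trace_unitary_conj (U : unitary (Matrix ι ι 𝕜)) (A : Matrix ι ι 𝕜) :
    trace ((U : Matrix ι ι 𝕜) * A * star (U : Matrix ι ι 𝕜)) = trace A :=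
  trace_units_conj (toUnits U) A

theorem exp_diagonal_ofReal (d : ι → ℝ) :
    exp (diagonal (ofReal ∘ d) : Matrix ι ι 𝕜) = diagonal (ofReal ∘ Real.exp ∘ d) := by
  rw [exp_diagonal]
  congr 1
  ext i
  rw [Pi.exp_def]
  simp only [Function.comp_apply, Real.exp_eq_exp_ℝ]
  exact (algebraMap_exp_comm (𝔸 := 𝕜) (d i)).symm

namespace IsHermitian

variable {A : Matrix ι ι 𝕜} (hA : A.IsHermitian)
include hA

theorem exp_eq_cfc : NormedSpace.exp A = hA.cfc Real.exp := by
  conv_lhs => rw [hA.spectral_theorem]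
  rw [IsHermitian.cfc, conjStarAlgAut_apply, conjStarAlgAut_apply, exp_unitary_conj,
    exp_diagonal_ofReal]

theorem re_cfc_apply_self (f : ℝ → ℝ) (i : ι) :
    re (hA.cfc f i i) =
      ∑ j, ‖(hA.eigenvectorUnitary : Matrix ι ι 𝕜) i j‖ ^ 2 * f (hA.eigenvalues j) := by
  rw [IsHermitian.cfc, conjStarAlgAut_apply, mul_apply, map_sum]
  refine Finset.sum_congr rfl fun j _ => ?_
  rw [mul_diagonal, star_apply, mul_right_comm, RCLike.star_def, RCLike.mul_conj]
  simp

theorem sum_norm_eigenvectorUnitary_apply_sq (i : ι) :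
    ∑ j, ‖(hA.eigenvectorUnitary : Matrix ι ι 𝕜) i j‖ ^ 2 = 1 := by
  have hone : hA.cfc (fun _ => 1) = 1 := by
    simp only [IsHermitian.cfc, Function.comp_def, diagonal_one, map_one]
  simpa [hone] using (hA.re_cfc_apply_self (fun _ => 1) i).symm

/-- The Peierls inequality. -/
theorem sum_map_re_diag_le_re_trace_cfc {f : ℝ → ℝ} (hf : ConvexOn ℝ Set.univ f) :
    ∑ i, f (re (A i i)) ≤ re (trace (hA.cfc f)) := by
  rw [trace, map_sum]
  gcongr with i
  rw [diag_apply]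
  have hid : A = hA.cfc id := hA.spectral_theorem
  conv_lhs => rw [hid]
  rw [hA.re_cfc_apply_self, hA.re_cfc_apply_self]
  exact hf.map_sum_le (fun j _ => by positivity) (hA.sum_norm_eigenvectorUnitary_apply_sq i)
    (fun j _ => Set.mem_univ _)

end IsHermitian

theorem peierls_bogoliubov [Nonempty ι] {M V : Matrix ι ι 𝕜}
    (hM : M.IsHermitian) (hV : V.IsHermitian) :
    Real.log (re (trace (exp M))) + re (trace (exp M * V)) / re (trace (exp M)) ≤
      Real.log (re (trace (exp (M + V)))) := by
  set U := hM.eigenvectorUnitary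
  set D : Matrix ι ι 𝕜 := diagonal (ofReal ∘ hM.eigenvalues)
  set V' := star (U : Matrix ι ι 𝕜) * V * U
  have hUU : (U : Matrix ι ι 𝕜) * star (U : Matrix ι ι 𝕜) = 1 := mul_star_self_of_mem U.2
  have hMD : M = U * D * star (U : Matrix ι ι 𝕜) := hM.spectral_theorem
  have hVV' : V = U * V' * star (U : Matrix ι ι 𝕜) := by
    rw [← mul_assoc, ← mul_assoc, hUU, one_mul, mul_assoc, hUU, mul_one]
  have hexpM : exp M = U * exp D * star (U : Matrix ι ι 𝕜) := by
    rw [← exp_unitary_conj, ← hMD]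
  have hK : (D + V').IsHermitian :=
    (isHermitian_diagonal_iff.2 fun i => conj_ofReal _).add
      (isHermitian_conjTranspose_mul_mul (U : Matrix ι ι 𝕜) hV)
  have hpeierls :
      ∑ i, Real.exp (hM.eigenvalues i + re (V' i i)) ≤ re (trace (exp (D + V'))) := by
    have := hK.sum_map_re_diag_le_re_trace_cfc convexOn_exp
    rw [← hK.exp_eq_cfc] at this
    simpa [D] using this
  have htrM : re (trace (exp M)) = ∑ i, Real.exp (hM.eigenvalues i) := by
    rw [hexpM, trace_unitary_conj, exp_diagonal_ofReal, trace_diagonal, map_sum]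
    simp
  have htrMV : re (trace (exp M * V)) = ∑ i, Real.exp (hM.eigenvalues i) * re (V' i i) := by
    have hconj : exp M * V = U * (exp D * V') * star (U : Matrix ι ι 𝕜) := by
      rw [hexpM]
      simp only [V', mul_assoc, hUU, mul_one]
    rw [hconj, trace_unitary_conj, exp_diagonal_ofReal, trace, map_sum]
    simp [diagonal_mul]
  have hMV : M + V = U * (D + V') * star (U : Matrix ι ι 𝕜) := by
    rw [hMD, hVV', mul_add, add_mul]
  rw [htrM, htrMV, hMV, exp_unitary_conj, trace_unitary_conj]
  exact (Real.log_sum_exp_add_mean_le _ _).trans <|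
    Real.log_le_log (Finset.sum_pos (fun i _ => Real.exp_pos _) Finset.univ_nonempty) hpeierls

end Matrix

/-- **Convexity of the free energy.**
For Hermitian `n × n` complex matrices `A` and `B`, the function
`h ↦ log Tr(exp(A + h B))` is convex on `ℝ` (the trace is real and we take
its real part). -/
theorem log_partition_function_convex {n : ℕ}
    (A B : Matrix (Fin n) (Fin n) ℂ) (hA : A.IsHermitian) (hB : B.IsHermitian) :
    ConvexOn ℝ Set.univ
      (fun h : ℝ => Real.log ((Matrix.trace (NormedSpace.exp (A + (h : ℂ) • B))).re)) := by
  rcases isEmpty_or_nonempty (Fin n) with hn | hn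
  · simpa [Matrix.trace] using convexOn_const 0 convex_univ
  have hsmul : ∀ t : ℝ, ((t : ℂ) • B).IsHermitian := fun t => hB.smul (Complex.conj_ofReal t)
  refine convexOn_univ_of_forall_le_add_mul fun h =>
    ⟨(Matrix.trace (exp (A + (h : ℂ) • B) * B)).re / (Matrix.trace (exp (A + (h : ℂ) • B))).re,
      fun t => ?_⟩
  have hPB := Matrix.peierls_bogoliubov (hA.add (hsmul h)) (hsmul (t - h))
  rw [add_assoc, ← add_smul, ← Complex.ofReal_add, add_sub_cancel, mul_smul_comm,
    Matrix.trace_smul, smul_eq_mul] at hPB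
  simp only [RCLike.re_to_complex, Complex.re_ofReal_mul] at hPB
  linear_combination hPB
end
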